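/- arXiv:cs/0511066 — 7 statements merged into one kernel-verified Lean document; each statement's English description precedes it below -/
import Mathlib

section
/- Let r_t be the symmetric residue of det(A) modulo M = p_0···p_t with all p_i prime and greater than l > 1. If r_t ≠ det(A), then the number of primes q > l such that the symmetric residue of det(A) modulo M·q still equals r_t is at most ⌈log_l(|det(A) - r_t| / M)⌉. -/
/-- If the symmetric residue `r` of `det A` modulo `M = p_0⋯p_t`
(all primes `> l > 1`) differs from `det A`, then the number of primes `q > l`
keeping the reconstruction modulo `M·q` equal to `r` is at most
`⌈log_l(|det A - r| / M)⌉`. -/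
theorem stmt_1 (n : ℕ) (A : Matrix (Fin n) (Fin n) ℤ)
    (l : ℕ) (hl : 1 < l) (t : ℕ)
    (p : Fin (t + 1) → ℕ) (hp : ∀ i, (p i).Prime) (hgt : ∀ i, l < p i)
    (hinj : Function.Injective p)
    (M : ℤ) (hM : M = ∏ i, (p i : ℤ))
    (r : ℤ) (hcong : r ≡ A.det [ZMOD M])
    (hlo : -(M / 2) ≤ r) (hhi : r < (M + 1) / 2)
    (hne : r ≠ A.det) :
    {q : ℕ | q.Prime ∧ l < q ∧ r ≡ A.det [ZMOD (M * q)]}.Finite ∧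
    (({q : ℕ | q.Prime ∧ l < q ∧ r ≡ A.det [ZMOD (M * q)]}.ncard : ℤ)
      ≤ ⌈Real.logb l (|(A.det : ℝ) - (r : ℝ)| / (M : ℝ))⌉) := by
  classical
  have hM0 : 0 < M := by
    rw [hM]
    exact Finset.prod_pos fun i _ => by exact_mod_cast (hp i).pos
  have hdvd : M ∣ A.det - r := Int.ModEq.dvd hcong
  obtain ⟨K, hK⟩ := hdvd
  have hK0 : K ≠ 0 := by
    rintro rfl
    apply hne
    have : A.det - r = 0 := by rw [hK]; ring
    linarith
  have hKabs : K.natAbs ≠ 0 := Int.natAbs_ne_zero.mpr hK0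
  have hset : {q : ℕ | q.Prime ∧ l < q ∧ r ≡ A.det [ZMOD (M * q)]}
      = {q : ℕ | q.Prime ∧ l < q ∧ (q : ℤ) ∣ K} := by
    ext q
    simp only [Set.mem_setOf_eq]
    refine and_congr_right fun hq => and_congr_right fun hlq => ?_
    rw [show (r ≡ A.det [ZMOD (M * q)]) ↔ M * q ∣ A.det - r from Int.modEq_iff_dvd, hK]
    exact mul_dvd_mul_iff_left hM0.ne'
  set F : Finset ℕ := K.natAbs.primeFactors.filter (fun q => l < q) with hF
  have hsetF : {q : ℕ | q.Prime ∧ l < q ∧ r ≡ A.det [ZMOD (M * q)]} = ↑F := by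
    rw [hset]
    ext q
    rw [Set.mem_setOf_eq, Finset.mem_coe, hF, Finset.mem_filter, Nat.mem_primeFactors]
    constructor
    · rintro ⟨h1, h2, h3⟩
      refine ⟨⟨h1, ?_, hKabs⟩, h2⟩
      rw [← Int.natAbs_dvd_natAbs] at h3
      simpa using h3
    · rintro ⟨⟨h1, h3, -⟩, h2⟩
      refine ⟨h1, h2, ?_⟩
      rw [← Int.natAbs_dvd_natAbs]
      simpa using h3
  have hfin : ({q : ℕ | q.Prime ∧ l < q ∧ r ≡ A.det [ZMOD (M * q)]}).Finite := by
    rw [hsetF]; exact F.finite_toSet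
  refine ⟨hfin, ?_⟩
  have hcard : {q : ℕ | q.Prime ∧ l < q ∧ r ≡ A.det [ZMOD (M * q)]}.ncard = F.card := by
    rw [hsetF, Set.ncard_coe_finset]
  -- l ^ F.card ≤ K.natAbs
  have hprod_dvd : (∏ q ∈ F, q) ∣ K.natAbs :=
    dvd_trans (Finset.prod_dvd_prod_of_subset _ _ _ (Finset.filter_subset _ _))
      (Nat.prod_primeFactors_dvd _)
  have hpow_le : l ^ F.card ≤ K.natAbs := by
    calc l ^ F.card = ∏ _q ∈ F, l := by rw [Finset.prod_const]
    _ ≤ ∏ q ∈ F, q := Finset.prod_le_prod' fun q hq => by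
        have := (Finset.mem_filter.mp hq).2; omega
    _ ≤ K.natAbs := Nat.le_of_dvd (Nat.pos_of_ne_zero hKabs) hprod_dvd
  -- real log bound
  have hl1 : (1 : ℝ) < (l : ℝ) := by exact_mod_cast hl
  have hKpos : (0 : ℝ) < (K.natAbs : ℝ) := by exact_mod_cast Nat.pos_of_ne_zero hKabs
  have hlog : (F.card : ℝ) ≤ Real.logb l (K.natAbs) := by
    have h1 : ((l : ℝ)) ^ F.card ≤ (K.natAbs : ℝ) := by exact_mod_cast hpow_le
    have h2 : Real.logb l ((l : ℝ) ^ F.card) ≤ Real.logb l (K.natAbs) :=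
      (Real.logb_le_logb hl1 (by positivity) hKpos).mpr h1
    rwa [Real.logb_pow, Real.logb_self_eq_one hl1, mul_one] at h2
  have harg : |(A.det : ℝ) - (r : ℝ)| / (M : ℝ) = (K.natAbs : ℝ) := by
    have hMR : (0 : ℝ) < (M : ℝ) := by exact_mod_cast hM0
    have : (A.det : ℝ) - (r : ℝ) = (M : ℝ) * (K : ℝ) := by exact_mod_cast congrArg Int.cast hK
    rw [this, abs_mul, abs_of_pos hMR, mul_comm, mul_div_assoc, div_self hMR.ne', mul_one,
      ← Int.cast_abs]
    rw [Nat.cast_natAbs, Int.cast_abs]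
  rw [hcard, harg]
  calc (F.card : ℤ) ≤ ⌈(F.card : ℝ)⌉ := by simp
  _ ≤ ⌈Real.logb l (K.natAbs)⌉ := Int.ceil_le_ceil hlog
end

section
/- For any positive integer s and real β ≥ 2, the sum over all primes p dividing s and all integers k with 1 ≤ k ≤ ⌊log_p(s)⌋ of log(p)·(1/β + 1/p^k)² is at most 1.78 + 2·log(s)/β + log²(s)/β². In particular, if β ≥ log(s), this sum is at most 5. -/
/-!
Expanding the square, the inner sum over `k` is at most
`log_p s / β² + 2 / (β (p - 1)) + 1 / (p² - 1)` by geometric series. After weighting by `log₂ p`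
and summing over `p ∣ s`, the first two terms are controlled by `log_p s ≤ log₂ s` and
`∑_{p ∣ s} log₂ p ≤ log₂ s`, the third by `∑_p log₂ p / (p² - 1) ≤ 1.78`. In that last sum the
primes below 64 contribute at most 0.9 (replacing `log₂ p` by `⌈log₂ p⌉`), and every larger term is
at most `(4 / log 2) (1 / √(n - 1) - 1 / √n)`, which telescopes to less than 0.88.
-/

open Real Finset

lemma logb_natCast_le_clog (b n : ℕ) : logb b n ≤ Nat.clog b n :=
  natCeil_logb_natCast b n ▸ Nat.le_ceil _

lemma sum_primesBelow_64_logb_div_sq_sub_one_le :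
    ∑ p ∈ Nat.primesBelow 64, logb 2 p / ((p : ℝ) ^ 2 - 1) ≤ 0.9 := by
  calc ∑ p ∈ Nat.primesBelow 64, logb 2 p / ((p : ℝ) ^ 2 - 1)
      ≤ ∑ p ∈ Nat.primesBelow 64, (Nat.clog 2 p : ℝ) / ((p : ℝ) ^ 2 - 1) := by
        refine sum_le_sum fun p hp => div_le_div_of_nonneg_right ?_ ?_
        · exact_mod_cast logb_natCast_le_clog 2 p
        · have : (2 : ℝ) ≤ p := mod_cast (Nat.prime_of_mem_primesBelow hp).two_le
          nlinarith
    _ ≤ 0.9 := by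
        simp only [Nat.primesBelow, sum_filter, sum_range_succ, sum_range_zero]
        norm_num

lemma log_div_sq_sub_one_le {x : ℝ} (hx : 1 < x) :
    log x / (x ^ 2 - 1) ≤ 4 * (1 / √(x - 1) - 1 / √x) := by
  obtain ⟨a, ha, rfl⟩ : ∃ a, 1 < a ∧ x = a ^ 2 :=
    ⟨√x, lt_sqrt_of_sq_lt (by linarith), (sq_sqrt (by linarith)).symm⟩
  rw [sqrt_sq (by linarith)]
  set b := √(a ^ 2 - 1)
  have hb2 : b ^ 2 = a ^ 2 - 1 := sq_sqrt (by nlinarith)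
  have hb : 0 < b := sqrt_pos.mpr (by nlinarith)
  have hba : b ≤ a := by nlinarith
  have hlog : log (a ^ 2) ≤ 2 * (a - 1) := by
    rw [log_pow]
    push_cast
    linarith [log_le_sub_one_of_pos (by linarith : 0 < a)]
  calc log (a ^ 2) / ((a ^ 2) ^ 2 - 1)
      ≤ 2 * (a - 1) / ((a ^ 2) ^ 2 - 1) := div_le_div_of_nonneg_right hlog (by nlinarith)
    _ = 2 / ((a + 1) * (a ^ 2 + 1)) := by
        rw [div_eq_div_iff (by nlinarith) (by positivity)]
        ring
    _ ≤ 2 / a ^ 3 := by gcongr; nlinarith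
    _ ≤ 4 * (1 / (a * b * (a + b))) := by
        rw [mul_one_div, div_le_div_iff₀ (by positivity) (by positivity)]
        nlinarith [mul_le_mul_of_nonneg_left hba (by positivity : 0 ≤ a * a)]
    _ = 4 * (1 / b - 1 / a) := by
        congr 1
        field_simp
        nlinarith

lemma sum_sub_le_of_antitoneOn {g : ℕ → ℝ} {m : ℕ} (hg : AntitoneOn g (Set.Ici m))
    (hg0 : ∀ n, m ≤ n → 0 ≤ g n) {S : Finset ℕ} (hS : ∀ n ∈ S, m < n) :
    ∑ n ∈ S, (g (n - 1) - g n) ≤ g m := by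
  have htel : ∀ N, m ≤ N → ∑ n ∈ Ioc m N, (g (n - 1) - g n) = g m - g N := by
    intro N hN
    induction N, hN using Nat.le_induction with
    | base => simp
    | succ N hN ih => rw [sum_Ioc_succ_top hN, ih, Nat.add_sub_cancel]; ring
  set N := max m (S.sup id)
  calc ∑ n ∈ S, (g (n - 1) - g n)
      ≤ ∑ n ∈ Ioc m N, (g (n - 1) - g n) := by
        refine sum_le_sum_of_subset_of_nonneg (fun n hn => ?_) fun n hn _ => ?_
        · exact mem_Ioc.mpr ⟨hS n hn, le_max_of_le_right (le_sup (f := id) hn)⟩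
        · obtain ⟨hmn, -⟩ := mem_Ioc.mp hn
          exact sub_nonneg.mpr
            (hg (Set.mem_Ici.mpr (by omega)) (Set.mem_Ici.mpr (by omega)) (by omega))
    _ = g m - g N := htel N (le_max_left _ _)
    _ ≤ g m := by linarith [hg0 N (le_max_left _ _)]

lemma sum_logb_div_sq_sub_one_le_of_forall_64_le {S : Finset ℕ} (hS : ∀ n ∈ S, 64 ≤ n) :
    ∑ n ∈ S, logb 2 n / ((n : ℝ) ^ 2 - 1) ≤ 0.88 := by
  set g : ℕ → ℝ := fun n => 1 / √n
  have hterm : ∀ n ∈ S, logb 2 n / ((n : ℝ) ^ 2 - 1) ≤ 4 / log 2 * (g (n - 1) - g n) := by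
    intro n hn
    have hn1 : (1 : ℝ) < n := mod_cast (by linarith [hS n hn] : 1 < n)
    calc logb 2 n / ((n : ℝ) ^ 2 - 1)
        = log n / ((n : ℝ) ^ 2 - 1) / log 2 := div_right_comm _ _ _
      _ ≤ 4 * (1 / √(n - 1) - 1 / √n) / log 2 :=
          div_le_div_of_nonneg_right (log_div_sq_sub_one_le hn1) (log_nonneg one_le_two)
      _ = 4 / log 2 * (g (n - 1) - g n) := by
          simp only [g, Nat.cast_pred (by linarith [hS n hn] : 0 < n)]
          ring
  have hg : AntitoneOn g (Set.Ici 63) := fun a ha b _ hab =>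
    one_div_le_one_div_of_le (sqrt_pos.mpr (Nat.cast_pos.mpr ((by norm_num : 0 < 63).trans_le ha)))
      (sqrt_le_sqrt (by exact_mod_cast hab))
  have hsqrt : 7.93 ≤ √63 := (le_sqrt (by norm_num) (by norm_num)).mpr (by norm_num)
  calc ∑ n ∈ S, logb 2 n / ((n : ℝ) ^ 2 - 1)
      ≤ ∑ n ∈ S, 4 / log 2 * (g (n - 1) - g n) := sum_le_sum hterm
    _ = 4 / log 2 * ∑ n ∈ S, (g (n - 1) - g n) := (mul_sum _ _ _).symm
    _ ≤ 4 / log 2 * g 63 := by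
        gcongr
        exact sum_sub_le_of_antitoneOn hg (fun n _ => by positivity)
          fun n hn => by linarith [hS n hn]
    _ ≤ 0.88 := by
        rw [div_mul_eq_mul_div, div_le_iff₀ (log_pos one_lt_two)]
        have : g 63 ≤ 1 / 7.93 := one_div_le_one_div_of_le (by norm_num) (by exact_mod_cast hsqrt)
        linarith [log_two_gt_d9]

lemma sum_logb_div_sq_sub_one_le {P : Finset ℕ} (hP : ∀ p ∈ P, p.Prime) :
    ∑ p ∈ P, logb 2 p / ((p : ℝ) ^ 2 - 1) ≤ 1.78 := by
  rw [← sum_filter_add_sum_filter_not P (· < 64)]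
  have hsmall : ∑ p ∈ P with p < 64, logb 2 p / ((p : ℝ) ^ 2 - 1) ≤ 0.9 := by
    refine (sum_le_sum_of_subset_of_nonneg (fun p hp => ?_) fun p hp _ => ?_).trans
      sum_primesBelow_64_logb_div_sq_sub_one_le
    · obtain ⟨hpP, hp64⟩ := mem_filter.mp hp
      exact Nat.mem_primesBelow.mpr ⟨hp64, hP p hpP⟩
    · have : (2 : ℝ) ≤ p := mod_cast (Nat.prime_of_mem_primesBelow hp).two_le
      exact div_nonneg (logb_nonneg one_lt_two (by linarith)) (by nlinarith)
  have hlarge := sum_logb_div_sq_sub_one_le_of_forall_64_le (S := {p ∈ P | ¬p < 64})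
    fun n hn => by simp only [mem_filter] at hn; omega
  linarith

lemma sum_primeFactors_logb_le {b : ℝ} (hb : 1 < b) (n : ℕ) :
    ∑ p ∈ n.primeFactors, logb b p ≤ logb b n := by
  rcases eq_or_ne n 0 with rfl | hn
  · simp
  have hpos : ∀ p ∈ n.primeFactors, (0 : ℝ) < p :=
    fun p hp => mod_cast (Nat.prime_of_mem_primeFactors hp).pos
  rw [← logb_prod _ _ fun p hp => (hpos p hp).ne']
  exact logb_le_logb_of_le hb (prod_pos hpos)
    (by
      rw [← Nat.cast_prod]
      exact_mod_cast Nat.le_of_dvd (Nat.pos_of_ne_zero hn) (Nat.prod_primeFactors_dvd n))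

lemma natLog_le_logb_two {p : ℕ} (hp : 2 ≤ p) (s : ℕ) : (Nat.log p s : ℝ) ≤ logb 2 s :=
  calc (Nat.log p s : ℝ) ≤ Nat.log 2 s := mod_cast Nat.log_anti_left one_lt_two hp
    _ ≤ logb 2 s := by exact_mod_cast Real.natLog_le_logb s 2

lemma sum_geom_Icc_le {y : ℝ} (hy : 1 < y) (m : ℕ) :
    ∑ k ∈ Icc 1 m, (1 / y) ^ k ≤ 1 / (y - 1) := by
  rw [← Ico_add_one_right_eq_Icc]
  calc ∑ k ∈ Ico 1 (m + 1), (1 / y) ^ k ≤ (1 / y) ^ 1 / (1 - 1 / y) :=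
        geom_sum_Ico_le_of_lt_one (by positivity) ((div_lt_one (by linarith)).mpr hy)
    _ = 1 / (y - 1) := by field_simp

lemma sum_Icc_add_inv_pow_sq_le {a x : ℝ} (ha : 0 ≤ a) (hx : 1 < x) (m : ℕ) :
    ∑ k ∈ Icc 1 m, (a + 1 / x ^ k) ^ 2 ≤ m * a ^ 2 + 2 * a / (x - 1) + 1 / (x ^ 2 - 1) := by
  calc ∑ k ∈ Icc 1 m, (a + 1 / x ^ k) ^ 2
      = ∑ k ∈ Icc 1 m, (a ^ 2 + 2 * a * (1 / x) ^ k + (1 / x ^ 2) ^ k) :=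
        sum_congr rfl fun k _ => by ring
    _ = m * a ^ 2 + 2 * a * ∑ k ∈ Icc 1 m, (1 / x) ^ k + ∑ k ∈ Icc 1 m, (1 / x ^ 2) ^ k := by
        rw [sum_add_distrib, sum_add_distrib, sum_const, Nat.card_Icc, ← mul_sum, nsmul_eq_mul]
        simp
    _ ≤ m * a ^ 2 + 2 * a * (1 / (x - 1)) + 1 / (x ^ 2 - 1) := by
        gcongr
        · exact sum_geom_Icc_le hx m
        · exact sum_geom_Icc_le (by nlinarith) m
    _ = m * a ^ 2 + 2 * a / (x - 1) + 1 / (x ^ 2 - 1) := by ring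

lemma logb_mul_sum_Icc_log_le {p : ℕ} (hp : p.Prime) (s : ℕ) {β : ℝ} (hβ : 0 < β) :
    logb 2 p * ∑ k ∈ Icc 1 (Nat.log p s), (1 / β + 1 / (p : ℝ) ^ k) ^ 2
      ≤ logb 2 p * (logb 2 s / β ^ 2 + 2 / β) + logb 2 p / ((p : ℝ) ^ 2 - 1) := by
  have hp2 : (2 : ℝ) ≤ p := mod_cast hp.two_le
  have hlog := natLog_le_logb_two hp.two_le s
  have hinner : ∑ k ∈ Icc 1 (Nat.log p s), (1 / β + 1 / (p : ℝ) ^ k) ^ 2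
      ≤ (logb 2 s / β ^ 2 + 2 / β) + 1 / ((p : ℝ) ^ 2 - 1) :=
    calc _ ≤ Nat.log p s * (1 / β) ^ 2 + 2 * (1 / β) / (p - 1) + 1 / ((p : ℝ) ^ 2 - 1) :=
          sum_Icc_add_inv_pow_sq_le (by positivity) (by linarith) _
      _ ≤ logb 2 s * (1 / β) ^ 2 + 2 * (1 / β) / 1 + 1 / ((p : ℝ) ^ 2 - 1) := by
          gcongr
          linarith
      _ = (logb 2 s / β ^ 2 + 2 / β) + 1 / ((p : ℝ) ^ 2 - 1) := by ring
  calc _ ≤ logb 2 p * ((logb 2 s / β ^ 2 + 2 / β) + 1 / ((p : ℝ) ^ 2 - 1)) :=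
        mul_le_mul_of_nonneg_left hinner (logb_nonneg one_lt_two (by linarith))
    _ = _ := by ring

theorem stmt_2_general (s : ℕ) (β : ℝ) (hβ : 2 ≤ β) :
    (∑ p ∈ s.primeFactors, ∑ k ∈ Finset.Icc 1 (Nat.log p s),
        Real.logb 2 p * (1 / β + 1 / (p : ℝ) ^ k) ^ 2)
      ≤ 1.78 + 2 * Real.logb 2 s / β + (Real.logb 2 s) ^ 2 / β ^ 2 ∧
    (Real.logb 2 s ≤ β →
      (∑ p ∈ s.primeFactors, ∑ k ∈ Finset.Icc 1 (Nat.log p s),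
          Real.logb 2 p * (1 / β + 1 / (p : ℝ) ^ k) ^ 2) ≤ 5) := by
  set L := logb 2 s
  have hβ0 : 0 < β := by linarith
  have hL : 0 ≤ L := (Nat.cast_nonneg _).trans (natLog_le_logb_two le_rfl s)
  have hbound : (∑ p ∈ s.primeFactors, ∑ k ∈ Icc 1 (Nat.log p s),
      logb 2 p * (1 / β + 1 / (p : ℝ) ^ k) ^ 2) ≤ 1.78 + 2 * L / β + L ^ 2 / β ^ 2 :=
    calc _ = ∑ p ∈ s.primeFactors,
          logb 2 p * ∑ k ∈ Icc 1 (Nat.log p s), (1 / β + 1 / (p : ℝ) ^ k) ^ 2 := by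
          simp_rw [mul_sum]
      _ ≤ ∑ p ∈ s.primeFactors,
          (logb 2 p * (L / β ^ 2 + 2 / β) + logb 2 p / ((p : ℝ) ^ 2 - 1)) :=
          sum_le_sum fun p hp => logb_mul_sum_Icc_log_le (Nat.prime_of_mem_primeFactors hp) s hβ0
      _ = (∑ p ∈ s.primeFactors, logb 2 p) * (L / β ^ 2 + 2 / β)
          + ∑ p ∈ s.primeFactors, logb 2 p / ((p : ℝ) ^ 2 - 1) := by
          rw [sum_add_distrib, sum_mul]
      _ ≤ L * (L / β ^ 2 + 2 / β) + 1.78 := by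
          gcongr
          · exact sum_primeFactors_logb_le one_lt_two s
          · exact sum_logb_div_sq_sub_one_le fun p hp => Nat.prime_of_mem_primeFactors hp
      _ = 1.78 + 2 * L / β + L ^ 2 / β ^ 2 := by ring
  refine ⟨hbound, fun hLβ => hbound.trans ?_⟩
  have h1 : 2 * L / β ≤ 2 := by rw [div_le_iff₀ hβ0]; linarith
  have h2 : L ^ 2 / β ^ 2 ≤ 1 := by rw [div_le_one (by positivity)]; nlinarith
  linarith

/-- For a positive integer `s` and real `β ≥ 2`, the sum over
primes `p ∣ s` and `1 ≤ k ≤ ⌊log_p s⌋` of `log₂(p)·(1/β + 1/p^k)²` is at most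
`1.78 + 2·log₂(s)/β + log₂²(s)/β²`; if moreover `β ≥ log₂ s`, it is at most 5. -/
theorem stmt_2 (s : ℕ) (hs : 0 < s) (β : ℝ) (hβ : 2 ≤ β) :
    (∑ p ∈ s.primeFactors, ∑ k ∈ Finset.Icc 1 (Nat.log p s),
        Real.logb 2 p * (1 / β + 1 / (p : ℝ) ^ k) ^ 2)
      ≤ 1.78 + 2 * Real.logb 2 s / β + (Real.logb 2 s) ^ 2 / β ^ 2 ∧
    (Real.logb 2 s ≤ β →
      (∑ p ∈ s.primeFactors, ∑ k ∈ Finset.Icc 1 (Nat.log p s),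
          Real.logb 2 p * (1 / β + 1 / (p : ℝ) ^ k) ^ 2) ≤ 5) :=
  stmt_2_general s β hβ
end

section
/- Let λ ≥ 2 be an integer and j > 1 an integer. Then the sum over all primes p with 8 < p < λ of ((1/λ)·⌈λ/p⌉)^j is at most (1/2)^j. -/
/-- For an integer `λ ≥ 2` and integer `j > 1`, the sum over
primes `8 < p < λ` of `((1/λ)·⌈λ/p⌉)^j` is at most `(1/2)^j`. -/
theorem stmt_4 (lam : ℕ) (hlam : 2 ≤ lam) (j : ℕ) (hj : 1 < j) :
    (∑ p ∈ Finset.filter (fun p => p.Prime ∧ 8 < p) (Finset.range lam),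
        ((1 / (lam : ℝ)) * ((⌈(lam : ℝ) / (p : ℝ)⌉ : ℤ) : ℝ)) ^ j)
      ≤ (1 / 2 : ℝ) ^ j := by
  set S := Finset.filter (fun p => p.Prime ∧ 8 < p) (Finset.range lam) with hS
  have hlam0 : (0:ℝ) < lam := by
    have : (2:ℝ) ≤ lam := by exact_mod_cast hlam
    linarith
  have hmem : ∀ p ∈ S, 11 ≤ p ∧ p < lam ∧ p % 2 = 1 := by
    intro p hp
    rw [hS, Finset.mem_filter, Finset.mem_range] at hp
    obtain ⟨hplt, hprime, h8⟩ := hp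
    have hodd : p % 2 = 1 := Nat.odd_iff.mp (hprime.odd_of_ne_two (by omega))
    have h9 : p ≠ 9 := by rintro rfl; norm_num at hprime
    exact ⟨by omega, hplt, hodd⟩
  set g : ℕ → ℝ := fun p => (1/2:ℝ)^j * (8/((p:ℝ)-1) - 8/((p:ℝ)+1)) with hg
  have step1 : (∑ p ∈ S, ((1 / (lam : ℝ)) * ((⌈(lam : ℝ) / (p : ℝ)⌉ : ℤ) : ℝ)) ^ j)
      ≤ ∑ p ∈ S, g p := by
    apply Finset.sum_le_sum
    intro p hp
    obtain ⟨h11, hplt, _⟩ := hmem p hp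
    have hp0 : (0:ℝ) < p := by
      have : (11:ℝ) ≤ p := by exact_mod_cast h11
      linarith
    have hp11 : (11:ℝ) ≤ p := by exact_mod_cast h11
    have hplam : (p:ℝ) ≤ lam := by
      have : p ≤ lam := le_of_lt hplt
      exact_mod_cast this
    have hceil0 : (0:ℝ) ≤ ((⌈(lam : ℝ) / (p : ℝ)⌉ : ℤ) : ℝ) := by
      have : (0:ℤ) ≤ ⌈(lam : ℝ) / (p : ℝ)⌉ := Int.ceil_nonneg (by positivity)
      exact_mod_cast this
    have hbase0 : (0:ℝ) ≤ (1 / (lam : ℝ)) * ((⌈(lam : ℝ) / (p : ℝ)⌉ : ℤ) : ℝ) := by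
      positivity
    have hceil : ((⌈(lam : ℝ) / (p : ℝ)⌉ : ℤ) : ℝ) ≤ 2 * lam / p := by
      have h1 : ((⌈(lam : ℝ) / (p : ℝ)⌉ : ℤ) : ℝ) < (lam : ℝ) / p + 1 :=
        Int.ceil_lt_add_one _
      have h2 : (1:ℝ) ≤ (lam : ℝ) / p := (one_le_div hp0).mpr hplam
      have : (lam:ℝ)/p + 1 ≤ 2 * lam / p := by
        rw [two_mul, add_div]; linarith
      linarith
    have hbase : (1 / (lam : ℝ)) * ((⌈(lam : ℝ) / (p : ℝ)⌉ : ℤ) : ℝ) ≤ 2 / p := by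
      calc (1 / (lam : ℝ)) * ((⌈(lam : ℝ) / (p : ℝ)⌉ : ℤ) : ℝ)
          ≤ (1 / (lam : ℝ)) * (2 * lam / p) := by
            apply mul_le_mul_of_nonneg_left hceil (by positivity)
        _ = 2 / p := by field_simp
    have h1 : ((1 / (lam : ℝ)) * ((⌈(lam : ℝ) / (p : ℝ)⌉ : ℤ) : ℝ)) ^ j ≤ (2/(p:ℝ))^j :=
      pow_le_pow_left₀ hbase0 hbase j
    have h2 : (2/(p:ℝ))^j = (1/2:ℝ)^j * (4/(p:ℝ))^j := by
      rw [← mul_pow]; ring_nf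
    have h3 : (4/(p:ℝ))^j ≤ (4/(p:ℝ))^2 := by
      apply pow_le_pow_of_le_one (by positivity) (by rw [div_le_one hp0]; linarith) (by omega)
    have h4 : (4/(p:ℝ))^2 ≤ 8/((p:ℝ)-1) - 8/((p:ℝ)+1) := by
      rw [div_pow, div_sub_div _ _ (by linarith : (p:ℝ)-1 ≠ 0) (by linarith : (p:ℝ)+1 ≠ 0)]
      rw [div_le_div_iff₀ (by positivity) (by nlinarith)]
      ring_nf
      nlinarith
    calc ((1 / (lam : ℝ)) * ((⌈(lam : ℝ) / (p : ℝ)⌉ : ℤ) : ℝ)) ^ j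
        ≤ (2/(p:ℝ))^j := h1
      _ = (1/2:ℝ)^j * (4/(p:ℝ))^j := h2
      _ ≤ (1/2:ℝ)^j * (4/(p:ℝ))^2 := by
          apply mul_le_mul_of_nonneg_left h3 (by positivity)
      _ ≤ g p := by
          apply mul_le_mul_of_nonneg_left h4 (by positivity)
  set T := (Finset.range lam).image (fun k => 2*k+11) with hT
  have hsub : S ⊆ T := by
    intro p hp
    obtain ⟨h11, hplt, hodd⟩ := hmem p hp
    rw [hT, Finset.mem_image]
    exact ⟨(p-11)/2, Finset.mem_range.mpr (by omega), by omega⟩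
  have step2 : ∑ p ∈ S, g p ≤ ∑ p ∈ T, g p := by
    apply Finset.sum_le_sum_of_subset_of_nonneg hsub
    intro p hpT _
    rw [hT, Finset.mem_image] at hpT
    obtain ⟨k, _, rfl⟩ := hpT
    have hk : (11:ℝ) ≤ ((2*k+11 : ℕ):ℝ) := by
      push_cast; linarith [Nat.cast_nonneg (α := ℝ) k]
    have : 8/(((2*k+11:ℕ):ℝ)+1) ≤ 8/(((2*k+11:ℕ):ℝ)-1) := by
      apply div_le_div_of_nonneg_left (by norm_num) (by linarith) (by linarith)
    simp only [hg]
    have h0 : (0:ℝ) ≤ 8/(((2*k+11:ℕ):ℝ)-1) - 8/(((2*k+11:ℕ):ℝ)+1) := by linarith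
    positivity
  have hinj : Function.Injective (fun k => 2*k+11) := by
    intro a b h; simp only [] at h; omega
  have step3 : ∑ p ∈ T, g p = ∑ k ∈ Finset.range lam, g (2*k+11) := by
    rw [hT, Finset.sum_image (fun a _ b _ h => hinj h)]
  have step4 : ∑ k ∈ Finset.range lam, g (2*k+11)
      = (1/2:ℝ)^j * ∑ k ∈ Finset.range lam,
        (8/(2*(k:ℝ)+10) - 8/(2*((k:ℝ)+1)+10)) := by
    rw [Finset.mul_sum]
    apply Finset.sum_congr rfl
    intro k _
    simp only [hg]
    push_cast
    ring_nf
  have step5 : ∑ k ∈ Finset.range lam,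
      (8/(2*(k:ℝ)+10) - 8/(2*((k:ℝ)+1)+10)) ≤ 1 := by
    have key := Finset.sum_range_sub' (fun k : ℕ => 8/(2*(k:ℝ)+10)) lam
    have e : ∑ k ∈ Finset.range lam, (8/(2*(k:ℝ)+10) - 8/(2*((k:ℝ)+1)+10))
        = 8/(2*((0:ℕ):ℝ)+10) - 8/(2*((lam:ℕ):ℝ)+10) := by
      rw [← key]
      apply Finset.sum_congr rfl
      intro k _
      push_cast
      ring_nf
    rw [e]
    have : (0:ℝ) ≤ 8/(2*(lam:ℝ)+10) := by positivity
    norm_num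
    linarith
  calc (∑ p ∈ S, ((1 / (lam : ℝ)) * ((⌈(lam : ℝ) / (p : ℝ)⌉ : ℤ) : ℝ)) ^ j)
      ≤ ∑ p ∈ S, g p := step1
    _ ≤ ∑ p ∈ T, g p := step2
    _ = (1/2:ℝ)^j * ∑ k ∈ Finset.range lam,
        (8/(2*(k:ℝ)+10) - 8/(2*((k:ℝ)+1)+10)) := by rw [step3, step4]
    _ ≤ (1/2:ℝ)^j * 1 := by
        apply mul_le_mul_of_nonneg_left step5 (by positivity)
    _ = (1/2:ℝ)^j := mul_one _
end

section
/- Let A be an n×n matrix with entries chosen independently and uniformly from {-⌊λ/2⌋, ..., ⌈λ/2⌉} (a set of λ+1 contiguous integers). For any prime p, the expected number of invariant factors of A divisible by p is at most 4. Moreover, if p ≥ λ+1, this expectation is at most 1.18. -/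
/-!
Let `A` be the matrix with entries `φ (ω i j)`. Its corank `n - rank A` is at most the number of
rows lying in the span of the earlier rows, since the other rows are linearly independent. Fix a
row index `k` and all other rows: the earlier rows span a subspace `V` of dimension `d ≤ k`, and a
row `x` with `φ ∘ x ∈ V` is determined by its entries at `d` pivot coordinates of `V` together
with the values `c (x j)` at the remaining coordinates, because `a ↦ (φ a, c a)` is injective
(for the theorem, `c v = v / p`, which together with `v mod p` determines `v`). So row `k` is
dependent with probability at most `β ^ (n - k)`, where `β = (⌊λ/p⌋ + 1) / (λ + 1)`, and the
expected corank is at most `∑ β ^ (n - k) ≤ β / (1 - β)`. Finally `β ≤ 2/3` for every prime `p`,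
and `β = 1 / (λ + 1) ≤ 1/2` when `p > λ`.
-/

open Finset Module Submodule

variable {K : Type*} [Field K]

theorem Submodule.exists_finset_card_eq_finrank_injOn_restrict {ι : Type*} [Fintype ι]
    (V : Submodule K (ι → K)) :
    ∃ I : Finset ι, #I = finrank K V ∧ Set.InjOn I.restrict (V : Set (ι → K)) := by
  classical
  let coord : ι → Module.Dual K V := fun i => (LinearMap.proj i).comp V.subtype
  obtain ⟨κ, a, ha, hspan, hli⟩ := exists_linearIndependent' K coord
  have : Fintype κ := Fintype.ofInjective a ha
  let I := univ.map ⟨a, ha⟩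
  have hinj : Set.InjOn I.restrict (V : Set (ι → K)) := by
    intro v hv w hw hvw
    let u : V := ⟨v - w, V.sub_mem hv hw⟩
    -- every coordinate functional lies in the span of the pivot ones, which all vanish at `u`
    have hle : span K (Set.range coord) ≤ LinearMap.ker (Module.Dual.eval K V u) := by
      rw [← hspan, span_le]
      rintro _ ⟨k, rfl⟩
      have := congrFun hvw ⟨a k, Finset.mem_map_of_mem _ (mem_univ k)⟩
      simpa [u, coord, sub_eq_zero] using this
    funext i
    simpa [u, coord, sub_eq_zero] using hle (subset_span ⟨i, rfl⟩)
  refine ⟨I, le_antisymm ?_ ?_, hinj⟩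
  · calc #I = Fintype.card κ := card_map _
      _ ≤ finrank K (Module.Dual K V) := hli.fintype_card_le_finrank
      _ = finrank K V := Subspace.dual_finrank_eq
  · let res : V →ₗ[K] (I → K) := LinearMap.pi (fun i => LinearMap.proj (i : ι)) ∘ₗ V.subtype
    have hres : Function.Injective res := fun v w h => Subtype.ext (hinj v.2 w.2 h)
    simpa using LinearMap.finrank_le_finrank_of_injective hres

open scoped Classical in
theorem Submodule.card_filter_comp_mem_le {ι α β : Type*} [Fintype ι] [DecidableEq ι] [Fintype α]
    [Fintype β]
    {φ : α → K} {c : α → β} (hφc : Function.Injective fun a => (φ a, c a))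
    (V : Submodule K (ι → K)) :
    #{x : ι → α | φ ∘ x ∈ V} ≤
      Fintype.card α ^ finrank K V * Fintype.card β ^ (Fintype.card ι - finrank K V) := by
  obtain ⟨I, hI, hinj⟩ := V.exists_finset_card_eq_finrank_injOn_restrict
  let code : (ι → α) → (I → α) × ({i // i ∉ I} → β) := fun x => (I.restrict x, fun i => c (x i))
  have hcode : Set.InjOn code {x | φ ∘ x ∈ V} := by
    intro x hx y hy hxy
    simp only [code, Prod.mk.injEq] at hxy
    have hφ : φ ∘ x = φ ∘ y := hinj hx hy (funext fun i => congrArg φ (congrFun hxy.1 i))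
    funext i
    refine hφc (Prod.ext (congrFun hφ i) ?_)
    by_cases hi : i ∈ I
    · exact congrArg c (congrFun hxy.1 ⟨i, hi⟩)
    · exact congrFun hxy.2 ⟨i, hi⟩
  calc #{x : ι → α | φ ∘ x ∈ V} ≤ Fintype.card ((I → α) × ({i // i ∉ I} → β)) :=
        card_le_card_of_injOn code (fun _ _ => mem_univ _) (by simpa using hcode)
    _ = _ := by simp [hI, Fintype.card_subtype_compl]

open scoped Classical in
theorem Submodule.card_filter_comp_mem_le_of_finrank_le {ι α β : Type*} [Fintype ι]
    [DecidableEq ι] [Fintype α] [Nonempty α] [Fintype β] {φ : α → K} {c : α → β}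
    (hφc : Function.Injective fun a => (φ a, c a))
    (hβα : Fintype.card β ≤ Fintype.card α) {V : Submodule K (ι → K)} {d : ℕ}
    (hd : finrank K V ≤ d) :
    (#{x : ι → α | φ ∘ x ∈ V} : ℝ) ≤
      ((Fintype.card β : ℝ) / Fintype.card α) ^ (Fintype.card ι - d) *
        Fintype.card α ^ Fintype.card ι := by
  have hq : (0 : ℝ) < Fintype.card α := by exact_mod_cast Fintype.card_pos
  have hρ : (Fintype.card β : ℝ) / Fintype.card α ≤ 1 :=
    div_le_one_of_le₀ (by exact_mod_cast hβα) hq.le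
  have hVι : finrank K V ≤ Fintype.card ι := by simpa using V.finrank_le
  calc (#{x : ι → α | φ ∘ x ∈ V} : ℝ)
      ≤ (Fintype.card α : ℝ) ^ finrank K V * Fintype.card β ^ (Fintype.card ι - finrank K V) := by
        exact_mod_cast V.card_filter_comp_mem_le hφc
    _ = ((Fintype.card β : ℝ) / Fintype.card α) ^ (Fintype.card ι - finrank K V) *
          Fintype.card α ^ Fintype.card ι := by
        rw [div_pow, ← Nat.add_sub_of_le hVι, pow_add, Nat.add_sub_cancel_left]
        field_simp
    _ ≤ _ := by gcongr ?_ * _; exact pow_le_pow_of_le_one (by positivity) hρ (by omega)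

theorem linearIndepOn_setOf_notMem_span_Iio {ι M : Type*} [LinearOrder ι] [AddCommGroup M]
    [Module K M] (v : ι → M) :
    LinearIndepOn K v {k | v k ∉ span K (v '' Set.Iio k)} := by
  classical
  rw [linearIndepOn_iff]
  intro l hl hl0
  by_contra hne
  have hsupp : l.support.Nonempty := Finsupp.support_nonempty_iff.mpr hne
  set k := l.support.max' hsupp
  have hk : k ∈ l.support := max'_mem _ _
  have hlast : l k • v k ∈ span K (v '' Set.Iio k) := by
    rw [Finsupp.linearCombination_apply, Finsupp.sum, ← add_sum_erase _ _ hk,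
      add_eq_zero_iff_eq_neg] at hl0
    rw [hl0, neg_mem_iff]
    refine sum_mem fun i hi => smul_mem _ _ (subset_span ⟨i, ?_, rfl⟩)
    exact lt_of_le_of_ne (le_max' _ _ (mem_of_mem_erase hi)) (ne_of_mem_erase hi)
  exact hl hk ((smul_mem_iff _ (Finsupp.mem_support_iff.mp hk)).mp hlast)

open scoped Classical in
theorem Matrix.card_sub_rank_le_card_filter_mem_span_Iio {m n : Type*} [Fintype m] [LinearOrder m]
    [Fintype n] (A : Matrix m n K) :
    Fintype.card m - A.rank ≤ #{k | A k ∈ span K (A '' Set.Iio k)} := by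
  have hli := (linearIndepOn_setOf_notMem_span_Iio (K := K) A).linearIndependent
  have hnew : #{k | A k ∉ span K (A '' Set.Iio k)} ≤ A.rank := by
    rw [rank_eq_finrank_span_row]
    calc #{k | A k ∉ span K (A '' Set.Iio k)}
        = finrank K (span K (Set.range fun k : {k | A k ∉ span K (A '' Set.Iio k)} => A k)) := by
          rw [finrank_span_eq_card hli]
          simp
      _ ≤ finrank K (span K (Set.range A)) :=
          finrank_mono (span_mono (Set.range_comp_subset_range _ _))
  have := card_filter_add_card_filter_not (s := univ) (fun k => A k ∈ span K (A '' Set.Iio k))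
  rw [card_univ] at this
  omega

open scoped Classical in
theorem card_filter_row_mem_span_Iio_le {ι α β : Type*} [Fintype ι] [DecidableEq ι] [Fintype α]
    [Nonempty α] [Fintype β] {φ : α → K} {c : α → β} (hφc : Function.Injective fun a => (φ a, c a))
    (hβα : Fintype.card β ≤ Fintype.card α) {n : ℕ} (k : Fin n) :
    (#{ω : Fin n → ι → α | φ ∘ ω k ∈ span K ((φ ∘ ·) ∘ ω '' Set.Iio k)} : ℝ) ≤
      ((Fintype.card β : ℝ) / Fintype.card α) ^ (Fintype.card ι - k) *
        Fintype.card (Fin n → ι → α) := by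
  let e := Equiv.funSplitAt k (ι → α)
  let W (o : {j // j ≠ k} → ι → α) : Submodule K (ι → K) :=
    span K (Set.range fun j : Set.Iio k => φ ∘ o ⟨j, j.2.ne⟩)
  have hW (o) : finrank K (W o) ≤ k := (finrank_range_le_card _).trans (by simp)
  calc (#{ω : Fin n → ι → α | φ ∘ ω k ∈ span K ((φ ∘ ·) ∘ ω '' Set.Iio k)} : ℝ)
      = #{z : (ι → α) × ({j // j ≠ k} → ι → α) | φ ∘ z.1 ∈ W z.2} := by
        congr 1
        refine card_equiv e fun ω => ?_
        simp only [mem_filter, mem_univ, true_and, Set.image_eq_range]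
        rfl
    _ = ∑ o, (#{x : ι → α | φ ∘ x ∈ W o} : ℝ) := by
        rw [card_filter, Fintype.sum_prod_type_right, Nat.cast_sum]
        simp only [card_filter]
    _ ≤ ∑ _o : {j // j ≠ k} → ι → α,
          ((Fintype.card β : ℝ) / Fintype.card α) ^ (Fintype.card ι - k) *
            Fintype.card α ^ Fintype.card ι :=
        sum_le_sum fun o _ => card_filter_comp_mem_le_of_finrank_le hφc hβα (hW o)
    _ = _ := by
        rw [sum_const, card_univ, nsmul_eq_mul, Fintype.card_congr e, Fintype.card_prod,
          Fintype.card_fun (α := ι) (β := α)]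
        push_cast
        ring

theorem Fin.sum_pow_sub_le_div_one_sub {ρ : ℝ} (h0 : 0 ≤ ρ) (h1 : ρ < 1) (n : ℕ) :
    ∑ k : Fin n, ρ ^ (n - k) ≤ ρ / (1 - ρ) := by
  calc ∑ k : Fin n, ρ ^ (n - k) = ∑ i ∈ range n, ρ ^ (i + 1) := by
        rw [Fin.sum_univ_eq_sum_range (fun k => ρ ^ (n - k)), ← sum_range_reflect]
        refine sum_congr rfl fun i hi => ?_
        rw [mem_range] at hi
        congr 1
        omega
    _ = ρ * ∑ i ∈ range n, ρ ^ i := by simp only [mul_sum, pow_succ, mul_comm]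
    _ ≤ ρ * (ρ ^ 0 / (1 - ρ)) := by
        gcongr
        rw [range_eq_Ico]
        exact geom_sum_Ico_le_of_lt_one h0 h1
    _ = ρ / (1 - ρ) := by ring

theorem average_sub_rank_le {α β : Type*} [Fintype α] [Nonempty α] [Fintype β] {φ : α → K}
    {c : α → β} (hφc : Function.Injective fun a => (φ a, c a))
    (hρ : (Fintype.card β : ℝ) / Fintype.card α < 1) (n : ℕ) :
    (∑ ω : Fin n → Fin n → α, ((n - (Matrix.of fun i j => φ (ω i j)).rank : ℕ) : ℝ)) /
        (Fintype.card α : ℝ) ^ (n * n) ≤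
      (Fintype.card β : ℝ) / Fintype.card α / (1 - (Fintype.card β : ℝ) / Fintype.card α) := by
  classical
  set ρ := (Fintype.card β : ℝ) / Fintype.card α
  have hq : (0 : ℝ) < Fintype.card α := by exact_mod_cast Fintype.card_pos
  have hβα : Fintype.card β ≤ Fintype.card α := by
    rw [div_lt_one hq] at hρ
    exact_mod_cast hρ.le
  have hcorank (ω : Fin n → Fin n → α) :
      n - (Matrix.of fun i j => φ (ω i j)).rank ≤
        #{k | φ ∘ ω k ∈ span K ((φ ∘ ·) ∘ ω '' Set.Iio k)} := by
    have h := (Matrix.of fun i j => φ (ω i j)).card_sub_rank_le_card_filter_mem_span_Iio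
    rwa [Fintype.card_fin] at h
  rw [div_le_iff₀ (by positivity)]
  calc ∑ ω : Fin n → Fin n → α, ((n - (Matrix.of fun i j => φ (ω i j)).rank : ℕ) : ℝ)
      ≤ ∑ ω : Fin n → Fin n → α, (#{k | φ ∘ ω k ∈ span K ((φ ∘ ·) ∘ ω '' Set.Iio k)} : ℝ) :=
        sum_le_sum fun ω _ => by exact_mod_cast hcorank ω
    _ = ∑ k : Fin n,
          (#{ω : Fin n → Fin n → α | φ ∘ ω k ∈ span K ((φ ∘ ·) ∘ ω '' Set.Iio k)} : ℝ) := by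
        simp only [card_filter, Nat.cast_sum]
        exact sum_comm
    _ ≤ ∑ k : Fin n, ρ ^ (n - k) * Fintype.card (Fin n → Fin n → α) :=
        sum_le_sum fun k _ => by
          have h := card_filter_row_mem_span_Iio_le (ι := Fin n) hφc hβα k
          rwa [Fintype.card_fin] at h
    _ ≤ ρ / (1 - ρ) * Fintype.card α ^ (n * n) := by
        rw [← sum_mul]
        simp only [Fintype.card_fun, Fintype.card_fin, Nat.cast_pow, ← pow_mul]
        gcongr
        exact Fin.sum_pow_sub_le_div_one_sub (by positivity) hρ n

theorem ZMod.injective_intCast_sub_prod_div {p : ℕ} [NeZero p] (m s : ℕ) :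
    Function.Injective fun v : Fin (m + 1) =>
      (((((v : ℕ) : ℤ) - (s : ℤ) : ℤ) : ZMod p),
        (⟨v / p, Nat.lt_succ_of_le (Nat.div_le_div_right (Nat.le_of_lt_succ v.2))⟩ :
          Fin (m / p + 1))) := by
  intro a b hab
  simp only [Prod.mk.injEq, Int.cast_sub, Int.cast_natCast, sub_left_inj, Fin.mk.injEq] at hab
  exact Fin.ext (Nat.ext_div_modEq hab.2 ((ZMod.natCast_eq_natCast_iff _ _ _).mp hab.1))

/-- For a random `n×n` matrix with i.i.d. entries uniform on the
`λ+1` contiguous integers `{-⌊λ/2⌋, …, ⌈λ/2⌉}` and a prime `p`, the expected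
number of invariant factors divisible by `p` (that is, `n - rank_p`) is at
most 4; and at most 1.18 when `p ≥ λ+1`. -/
theorem stmt_7 (n lam : ℕ) (hlam : 0 < lam) (p : ℕ) (hp : p.Prime) :
    ((∑ ω : Fin n → Fin n → Fin (lam + 1),
        ((n - (Matrix.of fun i j =>
            (((((ω i j : ℕ) : ℤ) - ((lam / 2 : ℕ) : ℤ)) : ℤ) : ZMod p)).rank : ℕ) : ℝ))
        / ((lam + 1 : ℕ) : ℝ) ^ (n * n) ≤ 4) ∧
    (lam + 1 ≤ p →
      (∑ ω : Fin n → Fin n → Fin (lam + 1),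
        ((n - (Matrix.of fun i j =>
            (((((ω i j : ℕ) : ℤ) - ((lam / 2 : ℕ) : ℤ)) : ℤ) : ZMod p)).rank : ℕ) : ℝ))
        / ((lam + 1 : ℕ) : ℝ) ^ (n * n) ≤ 1.18) := by
  have := Fact.mk hp
  set ρ : ℝ := ((lam / p + 1 : ℕ) : ℝ) / ((lam + 1 : ℕ) : ℝ)
  have hpos : (0 : ℝ) < ((lam + 1 : ℕ) : ℝ) := by positivity
  have hρ : ρ ≤ 2 / 3 := by
    have : lam / p ≤ lam / 2 := Nat.div_le_div_left hp.two_le two_pos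
    rw [div_le_div_iff₀ hpos (by norm_num)]
    exact_mod_cast (by omega : (lam / p + 1) * 3 ≤ 2 * (lam + 1))
  have hE := average_sub_rank_le (ZMod.injective_intCast_sub_prod_div (p := p) lam (lam / 2)) (by
    rw [Fintype.card_fin, Fintype.card_fin]
    exact hρ.trans_lt (by norm_num)) n
  simp only [Fintype.card_fin] at hE
  refine ⟨hE.trans ?_, fun hpl => hE.trans ?_⟩
  · rw [div_le_iff₀ (by linarith)]
    linarith
  · have hρ' : ρ ≤ 1 / 2 := by
      have : lam / p = 0 := Nat.div_eq_of_lt (by omega)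
      rw [div_le_div_iff₀ hpos (by norm_num)]
      exact_mod_cast (by omega : (lam / p + 1) * 2 ≤ 1 * (lam + 1))
    rw [div_le_iff₀ (by linarith)]
    linarith
end

section
/- Let A be an n×n integer matrix with rank n, Smith form diag(s_1, ..., s_n) with s_i | s_{i+1}. Let B be an n×k integer matrix and let X = (1/s̃)·N be the rational solution of AX = B written with common denominator s̃ (so gcd of s̃ and all entries of N is 1). Then for each i = 1, ..., k, the integer s̃ / gcd(s_i(N), s̃) divides s_{n-i+1}(A), where s_i(N) is the i-th invariant factor of N. -/
/-! Put `W = V * UN`, a unimodular matrix, and `q = s̃ / gcd(s_i(N), s̃)`. From `A N = s̃ B` one gets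
`diag(s) * W * diag(s(N)) = s̃ * (U⁻¹ B VN⁻¹)`, so `s̃ ∣ s_j W_{jm} s_m(N)` for all `j, m`.
For `m ≤ i` we have `s_m(N) ∣ s_i(N)`, hence `q ∣ s_j W_{jm}`, and for `j ≤ n - i + 1` (indices 1-based)
also `q ∣ s_{n-i+1}(A) W_{jm}`. This block of `W` has `n - i + 1` rows and `i` columns, so
it meets every permutation diagonal and `q ∣ s_{n-i+1}(A) det W`; as `det W = ±1`, we are done. -/

open Matrix

theorem Matrix.det_mem_of_forall_mem_block {ι R : Type*} [Fintype ι] [DecidableEq ι]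
    [CommRing R] (I : Ideal R) (W : Matrix ι ι R) (S T : Finset ι)
    (hcard : Fintype.card ι < S.card + T.card) (hW : ∀ j ∈ S, ∀ m ∈ T, W j m ∈ I) :
    W.det ∈ I := by
  rw [det_apply']
  refine Ideal.sum_mem _ fun σ _ => Ideal.mul_mem_left _ _ ?_
  obtain ⟨c, hc⟩ : (S ∩ T.map σ.toEmbedding).Nonempty :=
    Finset.inter_nonempty_of_card_lt_card_add_card (Finset.subset_univ _)
      (Finset.subset_univ _) (by simpa using hcard)
  obtain ⟨hcS, hcT⟩ := Finset.mem_inter.mp hc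
  obtain ⟨m, hmT, rfl⟩ := Finset.mem_map.mp hcT
  exact Ideal.prod_mem _ (Finset.mem_univ m) (hW _ hcS m hmT)

theorem Int.ediv_gcd_dvd_of_dvd_mul {a b c : ℤ} (hb : b ≠ 0) (h : b ∣ a * c) :
    b / (Int.gcd c b : ℤ) ∣ a := by
  have hg : 0 < Int.gcd c b := Int.gcd_pos_iff.mpr (Or.inr hb)
  obtain ⟨t, q, hcop, hc, hb'⟩ := Int.exists_gcd_one hg
  set g : ℤ := ((Int.gcd c b : ℕ) : ℤ)
  have hgne : g ≠ 0 := Int.natCast_ne_zero.mpr hg.ne'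
  rw [Int.ediv_eq_of_eq_mul_left hgne hb']
  rw [hb', hc, show a * (t * g) = a * t * g by ring] at h
  exact (Int.isCoprime_iff_gcd_eq_one.mpr (Int.gcd_comm t q ▸ hcop)).dvd_of_dvd_mul_right
    ((mul_dvd_mul_iff_right hgne).mp h)

theorem Matrix.mul_of_rectDiagonal_apply {ι R : Type*} [Semiring R] {n k : ℕ} (hk : k ≤ n)
    (M : Matrix ι (Fin n) R) (t : Fin k → R) (j : ι) (m : Fin k) :
    (M * Matrix.of fun (p : Fin n) (q : Fin k) => if (p : ℕ) = (q : ℕ) then t q else 0) j m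
      = M j (Fin.castLE hk m) * t m := by
  rw [mul_apply, Finset.sum_eq_single (Fin.castLE hk m)]
  · simp
  · intro p _ hp
    have : (p : ℕ) ≠ m := fun h => hp (Fin.ext h)
    simp [this]
  · simp

theorem Matrix.mul_mul_eq_smul_of_mul_eq_smul {l m n p R : Type*} [Fintype l] [Fintype m]
    [Fintype n] [Fintype p] [DecidableEq l] [DecidableEq p] [CommRing R]
    {A U : Matrix l l R} {D : Matrix l m R} {V : Matrix m l R}
    {N B : Matrix l p R} {UN : Matrix l n R} {DN : Matrix n p R} {VN : Matrix p p R}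
    (hU : IsUnit U.det) (hVN : IsUnit VN.det) (c : R)
    (hA : A = U * D * V) (hN : N = UN * DN * VN) (hsol : A * N = c • B) :
    D * (V * UN) * DN = c • (U⁻¹ * B * VN⁻¹) := by
  have : A * N = U * (D * (V * UN) * DN * VN) := by simp only [hA, hN, Matrix.mul_assoc]
  rw [← Matrix.smul_mul, ← Matrix.mul_smul, ← hsol, this, nonsing_inv_mul_cancel_left _ _ hU,
    mul_nonsing_inv_cancel_right _ _ hVN]

/-- Let `A` be a nonsingular `n×n` integer matrix with Smith form
`diag s` (`s i ∣ s j` for `i ≤ j`), and let `N` satisfy `A·N = s̃•B` with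
`gcd(s̃, entries of N) = 1` (so `X = (1/s̃)·N` solves `AX = B`).  If `tN` are
the invariant factors of `N` (via a Smith decomposition of `N`), then for each
`i = 1, …, k` the integer `s̃ / gcd(tN i, s̃)` divides `s_{n-i+1}(A)`. -/
theorem stmt_9 (n k : ℕ) (hk : k ≤ n) (A : Matrix (Fin n) (Fin n) ℤ)
    (U V : Matrix (Fin n) (Fin n) ℤ) (hU : IsUnit U.det) (hV : IsUnit V.det)
    (s : Fin n → ℤ) (hchain : ∀ i j : Fin n, i ≤ j → s i ∣ s j)
    (hsmith : A = U * Matrix.diagonal s * V)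
    (B N : Matrix (Fin n) (Fin k) ℤ) (st : ℤ) (hst : 0 < st)
    (hsol : A * N = st • B)
    (UN : Matrix (Fin n) (Fin n) ℤ) (VN : Matrix (Fin k) (Fin k) ℤ)
    (hUN : IsUnit UN.det) (hVN : IsUnit VN.det)
    (tN : Fin k → ℤ) (htchain : ∀ i j : Fin k, i ≤ j → tN i ∣ tN j)
    (hsmithN : N = UN * (Matrix.of fun (i : Fin n) (j : Fin k) =>
      if (i : ℕ) = (j : ℕ) then tN j else 0) * VN) :
    ∀ i : Fin k, (st / (Int.gcd (tN i) st : ℤ)) ∣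
      s ⟨n - 1 - (i : ℕ), by have := i.isLt; omega⟩ := by
  intro i
  set r : Fin n := ⟨n - 1 - (i : ℕ), by have := i.isLt; omega⟩
  set W := V * UN
  set I : Ideal ℤ := (Ideal.span {st / (Int.gcd (tN i) st : ℤ)}).colon {s r}
  have hkey := mul_mul_eq_smul_of_mul_eq_smul hU hVN st hsmith hsmithN hsol
  have hentry (j : Fin n) (m : Fin k) : st ∣ s j * W j (Fin.castLE hk m) * tN m := by
    have := congrFun (congrFun hkey j) m
    rw [mul_of_rectDiagonal_apply hk, diagonal_mul, Matrix.smul_apply, smul_eq_mul] at this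
    exact ⟨_, this⟩
  have hblock : ∀ j ∈ Finset.Iic r, ∀ c ∈ Finset.Iic (Fin.castLE hk i), W j c ∈ I := by
    intro j hj c hc
    rw [Finset.mem_Iic] at hj hc
    obtain ⟨m, rfl⟩ : ∃ m : Fin k, Fin.castLE hk m = c :=
      ⟨⟨c, lt_of_le_of_lt hc i.isLt⟩, rfl⟩
    have hdvd : st ∣ s j * W j (Fin.castLE hk m) * tN i :=
      (hentry j m).trans (mul_dvd_mul_left _ (htchain m i hc))
    rw [Submodule.mem_colon_singleton, Ideal.mem_span_singleton, smul_eq_mul, mul_comm]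
    exact (Int.ediv_gcd_dvd_of_dvd_mul hst.ne' hdvd).trans
      (mul_dvd_mul_right (hchain j r hj) _)
  have hdet : W.det ∈ I := det_mem_of_forall_mem_block I W _ _
    (by simp only [Fintype.card_fin, Fin.card_Iic, Fin.val_castLE, r]; omega) hblock
  rw [Submodule.mem_colon_singleton, Ideal.mem_span_singleton, smul_eq_mul] at hdet
  have hWdet : IsUnit W.det := by rw [det_mul]; exact hV.mul hUN
  exact hdet.trans (by simpa using mul_dvd_mul_right (isUnit_iff_dvd_one.mp hWdet) (s r))
end

section
/- Let t be a vector of length n over Z that is nonzero modulo a prime p, and let d ∈ Z/p^l Z. If x is a random vector in {a, a+1, ..., a+S-1}^n with independent uniform entries, then the probability that t·x ≡ d (mod p^l) is at most (1/S)·⌈S/p^l⌉. -/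
/-! Pick `i` with `p ∤ t i`, so that `t i` is a unit modulo `p ^ l`. Once the coordinates of `x`
other than `x i` are fixed, `t · x ≡ d` confines `x i` to one residue class modulo `p ^ l`, and a
residue class meets the `S` consecutive values of `x i` in at most `⌈S / p ^ l⌉` points. -/

open Finset Function

theorem card_filter_mul_card_le_of_card_update_le {ι α : Type*} [DecidableEq ι] [Fintype ι]
    [Fintype α] (P : (ι → α) → Prop) [DecidablePred P] (i : ι) (K : ℕ)
    (hK : ∀ ω, #{x | P (update ω i x)} ≤ K) :
    #{ω | P ω} * Fintype.card α ≤ K * Fintype.card (ι → α) := by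
  -- `(ω, x) ↦ (update ω i x, ω i)` trades the pairs with `P ω` for those with `P (update ω i x)`.
  have swap : Involutive fun q : (ι → α) × α => (update q.1 i q.2, q.1 i) := by
    intro q; simp
  calc #{ω | P ω} * Fintype.card α
      = #{q : (ι → α) × α | P q.1} := by
        rw [← card_univ (α := α), ← card_product]
        congr 1
        ext q
        simp
    _ = #{q : (ι → α) × α | P (update q.1 i q.2)} :=
        card_equiv swap.toPerm fun q => by simp
    _ = ∑ ω, #{x | P (update ω i x)} := by
        simp only [card_filter, Fintype.sum_prod_type]
    _ ≤ ∑ _ω : ι → α, K := sum_le_sum fun ω _ => hK ω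
    _ = K * Fintype.card (ι → α) := by rw [sum_const, card_univ, smul_eq_mul, mul_comm]

theorem card_filter_natCast_eq_le (S N : ℕ) [NeZero N] (r : ZMod N) :
    #{x : Fin S | ((x : ℕ) : ZMod N) = r} ≤ ⌈(S : ℝ) / N⌉₊ := by
  have hN : 0 < N := Nat.pos_of_neZero N
  have hS : S ≤ ⌈(S : ℝ) / N⌉₊ * N := by
    have := Nat.le_ceil ((S : ℝ) / N)
    rw [div_le_iff₀ (by positivity)] at this
    exact_mod_cast this
  calc #{x : Fin S | ((x : ℕ) : ZMod N) = r}
      ≤ #(range ⌈(S : ℝ) / N⌉₊) := by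
        refine card_le_card_of_injOn (fun x => (x : ℕ) / N) (fun x _ => ?_) ?_
        · simpa [Nat.div_lt_iff_lt_mul hN] using x.2.trans_le hS
        · intro x hx y hy hxy
          simp only [coe_filter, mem_univ, true_and, Set.mem_ofPred_eq] at hx hy
          have hmod := (ZMod.natCast_eq_natCast_iff' x y N).mp (hx.trans hy.symm)
          have hdiv : (x : ℕ) / N = y / N := hxy
          ext
          rw [← Nat.div_add_mod (x : ℕ) N, hdiv, hmod, Nat.div_add_mod]
    _ = ⌈(S : ℝ) / N⌉₊ := card_range _

theorem card_filter_mul_natCast_add_eq_le (S N : ℕ) [NeZero N] {c : ZMod N} (hc : IsUnit c)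
    (b d : ZMod N) : #{x : Fin S | c * ((x : ℕ) : ZMod N) + b = d} ≤ ⌈(S : ℝ) / N⌉₊ := by
  obtain ⟨u, rfl⟩ := hc
  calc #{x : Fin S | u * ((x : ℕ) : ZMod N) + b = d}
      = #{x : Fin S | ((x : ℕ) : ZMod N) = ↑u⁻¹ * (d - b)} := by
        congr 1
        refine filter_congr fun x _ => ?_
        rw [Units.eq_inv_mul_iff_mul_eq, eq_sub_iff_add_eq]
    _ ≤ ⌈(S : ℝ) / N⌉₊ := card_filter_natCast_eq_le S N _

theorem isUnit_intCast_zmod_pow {p : ℕ} (hp : p.Prime) {t : ℤ} (ht : ¬(p : ℤ) ∣ t) (l : ℕ) :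
    IsUnit (t : ZMod (p ^ l)) :=
  (ZMod.coe_int_isUnit_iff_isCoprime _ _).mpr <| by
    push_cast
    exact ((Nat.prime_iff_prime_int.mp hp).coprime_iff_not_dvd.mpr ht).pow_left

theorem card_filter_sum_mul_eq_mul_le {ι : Type*} [DecidableEq ι] [Fintype ι] (S N : ℕ)
    [NeZero N] (t : ι → ZMod N) {i : ι} (hi : IsUnit (t i)) (a d : ZMod N) :
    #{ω : ι → Fin S | ∑ j, t j * (a + ((ω j : ℕ) : ZMod N)) = d} * S
      ≤ ⌈(S : ℝ) / N⌉₊ * S ^ Fintype.card ι := by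
  suffices hfiber : ∀ ω : ι → Fin S,
      #{x | ∑ j, t j * (a + ((update ω i x j : ℕ) : ZMod N)) = d} ≤ ⌈(S : ℝ) / N⌉₊ by
    simpa using card_filter_mul_card_le_of_card_update_le
      (fun ω : ι → Fin S => ∑ j, t j * (a + ((ω j : ℕ) : ZMod N)) = d) i _ hfiber
  intro ω
  have hsplit : ∀ x : Fin S, ∑ j, t j * (a + ((update ω i x j : ℕ) : ZMod N))
      = t i * (x : ℕ) + (t i * a + ∑ j ∈ univ.erase i, t j * (a + ((ω j : ℕ) : ZMod N))) := by
    intro x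
    rw [← add_sum_erase _ _ (mem_univ i), update_self]
    rw [sum_congr rfl fun j hj => by rw [update_of_ne (ne_of_mem_erase hj)]]
    ring
  simp_rw [hsplit]
  exact card_filter_mul_natCast_add_eq_le S N hi _ d

theorem stmt_11_general (n S : ℕ) (hS : 0 < S) (a : ℤ)
    (p : ℕ) (hp : p.Prime) (l : ℕ)
    (t : Fin n → ℤ) (ht : ∃ i, ¬ ((p : ℤ) ∣ t i))
    (d : ZMod (p ^ l)) :
    ({ω : Fin n → Fin S |
        (((∑ i, t i * (a + ((ω i : ℕ) : ℤ))) : ℤ) : ZMod (p ^ l)) = d}.ncard : ℝ)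
        / (S : ℝ) ^ n
      ≤ ((⌈(S : ℝ) / (p : ℝ) ^ l⌉ : ℤ) : ℝ) / S := by
  obtain ⟨i, hti⟩ := ht
  have : NeZero (p ^ l) := ⟨pow_ne_zero l hp.ne_zero⟩
  have hcount := card_filter_sum_mul_eq_mul_le S (p ^ l) (fun j => (t j : ZMod (p ^ l)))
    (isUnit_intCast_zmod_pow hp hti l) a d
  rw [← Set.ncard_coe_finset] at hcount
  simp only [coe_filter, mem_univ, true_and, Fintype.card_fin] at hcount
  push_cast at hcount
  rw [div_le_div_iff₀ (by positivity) (by positivity),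
    ← natCast_ceil_eq_intCast_ceil (by positivity)]
  exact_mod_cast hcount

/-- If `t` is an integer vector nonzero modulo the prime `p` and
`x` is a random vector with i.i.d. entries uniform on `{a, …, a+S-1}`, then
`P(t·x ≡ d (mod p^l)) ≤ (1/S)·⌈S/p^l⌉`. -/
theorem stmt_11 (n S : ℕ) (hS : 0 < S) (a : ℤ)
    (p : ℕ) (hp : p.Prime) (l : ℕ) (hl : 0 < l)
    (t : Fin n → ℤ) (ht : ∃ i, ¬ ((p : ℤ) ∣ t i))
    (d : ZMod (p ^ l)) :
    ({ω : Fin n → Fin S |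
        (((∑ i, t i * (a + ((ω i : ℕ) : ℤ))) : ℤ) : ZMod (p ^ l)) = d}.ncard : ℝ)
        / (S : ℝ) ^ n
      ≤ ((⌈(S : ℝ) / (p : ℝ) ^ l⌉ : ℤ) : ℝ) / S :=
  stmt_11_general n S hS a p hp l t ht d
end

section
/- For any prime p ≥ 2 and any integer n ≥ 1, if β = 2/(p+1), then Σ_{j=1}^{n} (1/(1-β))^{j-1} · β^{j²} · (1/(1-β^j)) ≤ 3.46. Equivalently, Σ_{j=1}^{n} ((p+1)/(p-1))^{j-1} · (2/(p+1))^{j²} · (p+1)^j/((p+1)^j - 2^j) is at most its value at p = 2, which is less than 3.46. -/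
/-- helper: `2^(m+3) ≤ 3^(m+2)` in `ℕ`. -/
lemma aux_pow23 : ∀ m : ℕ, 2^(m+3) ≤ 3^(m+2) := by
  intro m; induction m with
  | zero => norm_num
  | succ n ih =>
      rw [pow_succ, pow_succ]
      exact Nat.mul_le_mul ih (by norm_num)

/-- helper: `2^((k+9)^2) ≤ 3^(k^2+15k+57)` in `ℕ`. -/
lemma aux_pow_main (k : ℕ) : (2:ℕ)^((k+9)^2) ≤ 3^(k*k+15*k+57) := by
  have h2 : ((2:ℕ)^((k+9)^2))^2 ≤ ((3:ℕ)^(k*k+15*k+57))^2 := by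
    rw [← pow_mul, ← pow_mul]
    calc (2:ℕ) ^ ((k+9)^2 * 2) ≤ 2 ^ ((k*k+15*k+57) * 3) := by
          apply Nat.pow_le_pow_right (by norm_num)
          nlinarith
      _ = 8 ^ (k*k+15*k+57) := by rw [show (k*k+15*k+57)*3 = 3*(k*k+15*k+57) by ring, pow_mul]; norm_num
      _ ≤ 9 ^ (k*k+15*k+57) := Nat.pow_le_pow_left (by norm_num) _
      _ = 3 ^ ((k*k+15*k+57) * 2) := by rw [show (k*k+15*k+57)*2 = 2*(k*k+15*k+57) by ring, pow_mul]; norm_num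
  exact (Nat.pow_le_pow_iff_left (by norm_num)).1 h2

noncomputable def gterm (j : ℕ) : ℝ :=
  (3:ℝ)^(j-1) * (2/3 : ℝ)^(j^2) * ((3:ℝ)^j / ((3:ℝ)^j - (2:ℝ)^j))

lemma gterm_nonneg (j : ℕ) : 0 ≤ gterm j := by
  unfold gterm
  have h : (2:ℝ)^j ≤ (3:ℝ)^j := pow_le_pow_left₀ (by norm_num) (by norm_num) j
  have := sub_nonneg.2 h
  positivity

lemma gterm_tail (k : ℕ) : gterm (k+8) ≤ (1/4:ℝ)^(k+8) := by
  unfold gterm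
  have hjm : (k+8) - 1 = k+7 := rfl
  rw [hjm]
  have hlt : (2:ℝ)^(k+8) < (3:ℝ)^(k+8) :=
    pow_lt_pow_left₀ (by norm_num) (by norm_num) (by omega)
  have hden : (0:ℝ) < (3:ℝ)^(k+8) - (2:ℝ)^(k+8) := sub_pos.2 hlt
  have h29 : (2:ℕ)^(k+9) ≤ 3^(k+8) := aux_pow23 (k+6)
  have h29' : (2:ℝ)^(k+9) ≤ (3:ℝ)^(k+8) := by exact_mod_cast h29
  have hC : (3:ℝ)^(k+8) / ((3:ℝ)^(k+8) - (2:ℝ)^(k+8)) ≤ 2 := by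
    rw [div_le_iff₀ hden]
    have : (2:ℝ)^(k+9) = 2 * 2^(k+8) := by rw [pow_succ]; ring
    nlinarith
  have hnn : (0:ℝ) ≤ (3:ℝ)^(k+7) * (2/3:ℝ)^((k+8)^2) := by positivity
  calc (3:ℝ)^(k+7) * (2/3:ℝ)^((k+8)^2) * ((3:ℝ)^(k+8) / ((3:ℝ)^(k+8) - (2:ℝ)^(k+8)))
      ≤ (3:ℝ)^(k+7) * (2/3:ℝ)^((k+8)^2) * 2 := mul_le_mul_of_nonneg_left hC hnn
    _ ≤ (1/4:ℝ)^(k+8) := by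
        rw [div_pow, one_div_pow]
        rw [show (3:ℝ)^(k+7) * ((2:ℝ)^((k+8)^2) / (3:ℝ)^((k+8)^2)) * 2
              = ((3:ℝ)^(k+7) * (2:ℝ)^((k+8)^2) * 2) / (3:ℝ)^((k+8)^2) by ring]
        rw [div_le_div_iff₀ (by positivity) (by positivity)]
        rw [one_mul]
        have key : (3:ℕ)^(k+7) * 2^((k+8)^2) * 2 * 4^(k+8) ≤ 3^((k+8)^2) := by
          have e1 : (2:ℕ)^((k+8)^2) * 2 * 4^(k+8) = 2^((k+9)^2) := by
            rw [show (4:ℕ) = 2^2 by norm_num, ← pow_mul, ← pow_succ, ← pow_add]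
            congr 1; ring
          calc (3:ℕ)^(k+7) * 2^((k+8)^2) * 2 * 4^(k+8)
              = 3^(k+7) * (2^((k+8)^2) * 2 * 4^(k+8)) := by ring
            _ = 3^(k+7) * 2^((k+9)^2) := by rw [e1]
            _ ≤ 3^(k+7) * 3^(k*k+15*k+57) := Nat.mul_le_mul_left _ (aux_pow_main k)
            _ = 3^((k+8)^2) := by rw [← pow_add]; congr 1; ring
        exact_mod_cast key

lemma gsum_tail : ∀ n, 7 ≤ n →
    ∑ j ∈ Finset.Icc 1 n, gterm j ≤ 3.4545 - (1/3) * (1/4:ℝ)^n := by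
  intro n hn
  induction n, hn using Nat.le_induction with
  | base =>
      rw [show Finset.Icc 1 7 = {1,2,3,4,5,6,7} from rfl]
      unfold gterm
      norm_num
  | succ n hn ih =>
      rw [Finset.sum_Icc_succ_top (by omega)]
      have hg : gterm (n+1) ≤ (1/4:ℝ)^(n+1) := by
        have e : n + 1 = (n-7) + 8 := by omega
        rw [e]; exact gterm_tail (n-7)
      have e2 : (1/4:ℝ)^(n+1) = (1/4:ℝ)^n * (1/4) := pow_succ _ _
      linarith


lemma term3 (p : ℕ) (hp : 3 ≤ p) (k : ℕ) :
    (((p : ℝ) + 1) / ((p : ℝ) - 1)) ^ k * (2 / ((p : ℝ) + 1)) ^ ((k+1) ^ 2) *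
      (((p : ℝ) + 1) ^ (k+1) / (((p : ℝ) + 1) ^ (k+1) - 2 ^ (k+1))) ≤ (1/2:ℝ)^k := by
  have hx : (3:ℝ) ≤ (p:ℝ) := by exact_mod_cast hp
  have hx1 : (0:ℝ) < (p:ℝ) - 1 := by linarith
  have hA : ((p:ℝ)+1)/((p:ℝ)-1) ≤ 2 := by rw [div_le_iff₀ hx1]; linarith
  have hAk : (((p:ℝ)+1)/((p:ℝ)-1))^k ≤ 2^k :=
    pow_le_pow_left₀ (div_nonneg (by linarith) (by linarith)) hA k
  have hB : 2/((p:ℝ)+1) ≤ 1/2 := by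
    rw [div_le_div_iff₀ (by linarith) (by norm_num)]; linarith
  have hBk : (2/((p:ℝ)+1))^((k+1)^2) ≤ (1/2:ℝ)^((k+1)^2) :=
    pow_le_pow_left₀ (div_nonneg (by norm_num) (by linarith)) hB _
  have hlt : (2:ℝ)^(k+1) < ((p:ℝ)+1)^(k+1) :=
    pow_lt_pow_left₀ (by linarith) (by norm_num) (by omega)
  have hden : (0:ℝ) < ((p:ℝ)+1)^(k+1) - 2^(k+1) := sub_pos.2 hlt
  have h4 : (4:ℝ)^(k+1) ≤ ((p:ℝ)+1)^(k+1) :=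
    pow_le_pow_left₀ (by norm_num) (by linarith) _
  have h24 : (2:ℝ)^(k+2) ≤ 4^(k+1) := by
    rw [show (4:ℝ) = 2^2 by norm_num, ← pow_mul]
    exact pow_le_pow_right₀ (by norm_num) (by omega)
  have hC : ((p:ℝ)+1)^(k+1) / (((p:ℝ)+1)^(k+1) - 2^(k+1)) ≤ 2 := by
    rw [div_le_iff₀ hden]
    have e : (2:ℝ)^(k+2) = 2 * 2^(k+1) := by rw [pow_succ]; ring
    nlinarith
  have hCnn : (0:ℝ) ≤ ((p:ℝ)+1)^(k+1) / (((p:ℝ)+1)^(k+1) - 2^(k+1)) :=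
    div_nonneg (by positivity) hden.le
  calc (((p : ℝ) + 1) / ((p : ℝ) - 1)) ^ k * (2 / ((p : ℝ) + 1)) ^ ((k+1) ^ 2) *
        (((p : ℝ) + 1) ^ (k+1) / (((p : ℝ) + 1) ^ (k+1) - 2 ^ (k+1)))
      ≤ 2^k * (1/2:ℝ)^((k+1)^2) * 2 := by
        apply mul_le_mul _ hC hCnn (by positivity)
        exact mul_le_mul hAk hBk (by positivity) (by positivity)
    _ ≤ (1/2:ℝ)^k := by
        rw [one_div_pow, one_div_pow]
        rw [show (2:ℝ)^k * (1/2^((k+1)^2)) * 2 = (2^k*2) / 2^((k+1)^2) by ring]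
        rw [div_le_div_iff₀ (by positivity) (by positivity), one_mul, ← pow_succ, ← pow_add]
        exact pow_le_pow_right₀ (by norm_num) (by nlinarith)

/-- For any prime `p` and any `n ≥ 1`,
`Σ_{j=1}^{n} ((p+1)/(p-1))^{j-1} · (2/(p+1))^{j²} · (p+1)^j/((p+1)^j - 2^j)`
is at most 3.46. -/
theorem stmt_15 (p : ℕ) (hp : p.Prime) (n : ℕ) (hn : 1 ≤ n) :
    ∑ j ∈ Finset.Icc 1 n,
        (((p : ℝ) + 1) / ((p : ℝ) - 1)) ^ (j - 1) * (2 / ((p : ℝ) + 1)) ^ (j ^ 2) *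
          (((p : ℝ) + 1) ^ j / (((p : ℝ) + 1) ^ j - 2 ^ j))
      ≤ 3.46 := by
  have hp2 : 2 ≤ p := hp.two_le
  rcases eq_or_lt_of_le hp2 with h2 | h3
  · -- p = 2
    have hpe : p = 2 := h2.symm
    subst hpe
    have hsum : ∑ j ∈ Finset.Icc 1 n,
        ((((2:ℕ) : ℝ) + 1) / (((2:ℕ) : ℝ) - 1)) ^ (j - 1) * (2 / (((2:ℕ):ℝ) + 1)) ^ (j ^ 2) *
          ((((2:ℕ):ℝ) + 1) ^ j / ((((2:ℕ):ℝ) + 1) ^ j - 2 ^ j))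
        = ∑ j ∈ Finset.Icc 1 n, gterm j := by
      refine Finset.sum_congr rfl fun j _ => ?_
      unfold gterm
      norm_num
    rw [hsum]
    have mono : ∑ j ∈ Finset.Icc 1 n, gterm j ≤ ∑ j ∈ Finset.Icc 1 (max n 7), gterm j :=
      Finset.sum_le_sum_of_subset_of_nonneg
        (Finset.Icc_subset_Icc_right (le_max_left _ _)) (fun j _ _ => gterm_nonneg j)
    have key := gsum_tail (max n 7) (le_max_right _ _)
    have hpos : (0:ℝ) ≤ (1/3) * (1/4:ℝ)^(max n 7) := by positivity
    linarith
  · -- 3 ≤ p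
    have hp3 : 3 ≤ p := h3
    have main : ∀ m, 1 ≤ m → ∑ j ∈ Finset.Icc 1 m,
        (((p : ℝ) + 1) / ((p : ℝ) - 1)) ^ (j - 1) * (2 / ((p : ℝ) + 1)) ^ (j ^ 2) *
          (((p : ℝ) + 1) ^ j / (((p : ℝ) + 1) ^ j - 2 ^ j)) ≤ 2 - 2 * (1/2:ℝ)^m := by
      intro m hm
      induction m, hm using Nat.le_induction with
      | base =>
          rw [Finset.Icc_self, Finset.sum_singleton]
          have := term3 p hp3 0
          norm_num at this ⊢
          linarith
      | succ m hm ih =>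
          rw [Finset.sum_Icc_succ_top (by omega)]
          have ht : (((p : ℝ) + 1) / ((p : ℝ) - 1)) ^ ((m+1) - 1) * (2 / ((p : ℝ) + 1)) ^ ((m+1) ^ 2) *
              (((p : ℝ) + 1) ^ (m+1) / (((p : ℝ) + 1) ^ (m+1) - 2 ^ (m+1))) ≤ (1/2:ℝ)^m := by
            have := term3 p hp3 m
            simpa using this
          have e2 : (1/2:ℝ)^(m+1) = (1/2:ℝ)^m * (1/2) := pow_succ _ _
          linarith
    have := main n hn
    have hpow : (0:ℝ) ≤ (1/2:ℝ)^n := by positivity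
    norm_num at this ⊢
    linarith
end
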